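/- Let φ be an N-function that is C² on (0,∞), satisfies the Δ₂-condition with constant D, and is uniformly convex with constants 0 < c ≤ C. Define A : ℝ → ℝ by A(t) = φ'(|t|) t/|t| for t ≠ 0 and A(0) = 0. Then A is continuous and the pair (φ, A) satisfies the orthotropic growth conditions with constants depending only on c, C, D. -/

import Mathlib

open MeasureTheory

/-- An N-function `Φ` with derivative `Φ'`: differentiable on `[0,∞)` with
`Φ(0) = 0`, `Φ(t) = ∫₀ᵗ Φ'(s) ds`, `Φ'` nondecreasing, right-continuous,
`Φ'(0) = 0` and `Φ'(t) > 0` for `t > 0`. -/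
structure IsNFunction (Φ Φ' : ℝ → ℝ) : Prop where
  map_zero : Φ 0 = 0
  eq_integral : ∀ t : ℝ, 0 ≤ t → Φ t = ∫ s in (0:ℝ)..t, Φ' s
  deriv_zero : Φ' 0 = 0
  deriv_pos : ∀ t : ℝ, 0 < t → 0 < Φ' t
  deriv_mono : MonotoneOn Φ' (Set.Ici 0)
  deriv_rightCont : ∀ t : ℝ, 0 ≤ t → ContinuousWithinAt Φ' (Set.Ici t) t

/-- The Δ₂-condition with constant `D`. -/
def Delta2 (Φ : ℝ → ℝ) (D : ℝ) : Prop := ∀ t : ℝ, 0 < t → Φ (2 * t) ≤ D * Φ t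

/-- Uniform convexity with constants `c ≤ C`: `c Φ'(t) ≤ t Φ''(t) ≤ C Φ'(t)` for `t > 0`. -/
def UniformlyConvex (Φ' Φ'' : ℝ → ℝ) (c C : ℝ) : Prop :=
  ∀ t : ℝ, 0 < t → c * Φ' t ≤ t * Φ'' t ∧ t * Φ'' t ≤ C * Φ' t

/-- The orthotropic growth conditions for the pair `(φ, A)` with constants `c ≤ C`
(all terms vanish when `ξ = η`). -/
def OrthotropicGrowth (Φ'' A : ℝ → ℝ) (c C : ℝ) : Prop :=
  ∀ ξ η : ℝ, c * (Φ'' (|ξ| + |η|) * |ξ - η| ^ 2) ≤ (A ξ - A η) * (ξ - η) ∧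
    |A ξ - A η| ≤ C * (Φ'' (|ξ| + |η|) * |ξ - η|)

/-- `A(t) = φ'(|t|) t/|t|` for `t ≠ 0`, `A(0) = 0`. -/
noncomputable def Aof (Φ' : ℝ → ℝ) (t : ℝ) : ℝ :=
  if t = 0 then 0 else Φ' |t| * t / |t|

/-!
Uniform convexity says that `t ↦ φ'(t) t^(-c)` increases and `t ↦ φ'(t) t^(-C)` decreases on
`(0, ∞)`; hence `φ'` grows by at most the factor `3^C` between arguments within a factor `3` of
each other, and `t φ''(t)` is comparable to `φ'(t)`. With `T = |ξ| + |η|` it therefore suffices to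
compare `T (A ξ - A η)` with `φ'(T) (ξ - η)`. For arguments of opposite signs
`A ξ - A η = φ'(|ξ|) + φ'(|η|)` is comparable to `φ'(T)`. For `0 ≤ η < ξ ≤ 2η` the mean value
theorem gives `φ'(ξ) - φ'(η) = φ''(x) (ξ - η)` with `x` comparable to `T`, while for `2η < ξ`
the gap `φ'(ξ) - φ'(η) ≥ φ'(ξ) - φ'(ξ/2) ≥ (1 - 2^(-c)) φ'(ξ)` does the job.
-/

open Set

section RpowComparison

variable {f f' : ℝ → ℝ} {e : ℝ}

theorem hasDerivAt_mul_rpow_neg {t : ℝ} (ht : 0 < t) (hf : HasDerivAt f (f' t) t) :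
    HasDerivAt (fun x => f x * x ^ (-e)) (t ^ (-e - 1) * (t * f' t - e * f t)) t := by
  refine (hf.mul (Real.hasDerivAt_rpow_const (p := -e) (Or.inl ht.ne'))).congr_deriv ?_
  rw [show t ^ (-e) = t ^ (-e - 1) * t by rw [← Real.rpow_add_one ht.ne']; ring_nf]
  ring

theorem monotoneOn_mul_rpow_neg (hf : ∀ t, 0 < t → HasDerivAt f (f' t) t)
    (h : ∀ t, 0 < t → e * f t ≤ t * f' t) :
    MonotoneOn (fun t => f t * t ^ (-e)) (Ioi 0) := by
  have hd := fun t (ht : 0 < t) => hasDerivAt_mul_rpow_neg (e := e) ht (hf t ht)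
  refine monotoneOn_of_hasDerivWithinAt_nonneg (convex_Ioi 0)
    (fun t ht => (hd t ht).continuousAt.continuousWithinAt)
    (fun t ht => (hd t (interior_subset ht)).hasDerivWithinAt) ?_
  rw [interior_Ioi]
  exact fun t ht => mul_nonneg (Real.rpow_nonneg ht.le _) (sub_nonneg.2 (h t ht))

theorem antitoneOn_mul_rpow_neg (hf : ∀ t, 0 < t → HasDerivAt f (f' t) t)
    (h : ∀ t, 0 < t → t * f' t ≤ e * f t) :
    AntitoneOn (fun t => f t * t ^ (-e)) (Ioi 0) := by
  have hd := fun t (ht : 0 < t) => hasDerivAt_mul_rpow_neg (e := e) ht (hf t ht)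
  refine antitoneOn_of_hasDerivWithinAt_nonpos (convex_Ioi 0)
    (fun t ht => (hd t ht).continuousAt.continuousWithinAt)
    (fun t ht => (hd t (interior_subset ht)).hasDerivWithinAt) ?_
  rw [interior_Ioi]
  exact fun t ht => mul_nonpos_of_nonneg_of_nonpos (Real.rpow_nonneg ht.le _)
    (sub_nonpos.2 (h t ht))

end RpowComparison

namespace UniformlyConvex

variable {φ' φ'' : ℝ → ℝ} {c C s t r : ℝ}

theorem apply_le_rpow_mul (hU : UniformlyConvex φ' φ'' c C)
    (hd : ∀ t, 0 < t → HasDerivAt φ' (φ'' t) t) (hC : 0 ≤ C) (hφs : 0 ≤ φ' s)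
    (hs : 0 < s) (hst : s ≤ t) (htr : t ≤ r * s) : φ' t ≤ r ^ C * φ' s := by
  have ht : 0 < t := hs.trans_le hst
  have h := antitoneOn_mul_rpow_neg hd (fun t ht => (hU t ht).2) hs ht hst
  simp only [Real.rpow_neg ht.le, Real.rpow_neg hs.le, ← div_eq_mul_inv] at h
  rw [div_le_div_iff₀ (by positivity) (by positivity)] at h
  have hr : t / s ≤ r := (div_le_iff₀ hs).2 htr
  calc φ' t = φ' t * s ^ C / s ^ C := by field_simp
    _ ≤ φ' s * t ^ C / s ^ C := by gcongr
    _ = (t / s) ^ C * φ' s := by rw [Real.div_rpow ht.le hs.le]; ring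
    _ ≤ r ^ C * φ' s := by gcongr

theorem rpow_mul_le_apply (hU : UniformlyConvex φ' φ'' c C)
    (hd : ∀ t, 0 < t → HasDerivAt φ' (φ'' t) t) (hs : 0 < s) (hr : 1 ≤ r) :
    r ^ c * φ' s ≤ φ' (r * s) := by
  have hrs : 0 < r * s := by positivity
  have h := monotoneOn_mul_rpow_neg hd (fun t ht => (hU t ht).1) hs hrs
    (le_mul_of_one_le_left hs.le hr)
  simp only [Real.rpow_neg hrs.le, Real.rpow_neg hs.le, ← div_eq_mul_inv] at h
  rw [div_le_div_iff₀ (by positivity) (by positivity), Real.mul_rpow (by positivity) hs.le] at h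
  nlinarith [Real.rpow_pos_of_pos hs c]

end UniformlyConvex

section Aof

variable {Φ' : ℝ → ℝ}

theorem Aof_neg (Φ' : ℝ → ℝ) (t : ℝ) : Aof Φ' (-t) = -Aof Φ' t := by
  by_cases ht : t = 0
  · simp [Aof, ht]
  · simp only [Aof, neg_eq_zero, ht, if_false, abs_neg]
    ring

theorem Aof_of_nonneg (h0 : Φ' 0 = 0) {t : ℝ} (ht : 0 ≤ t) : Aof Φ' t = Φ' t := by
  rcases ht.eq_or_lt with rfl | ht
  · simp [Aof, h0]
  · rw [Aof, if_neg ht.ne', abs_of_pos ht, mul_div_cancel_right₀ _ ht.ne']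

theorem Aof_of_nonpos (h0 : Φ' 0 = 0) {t : ℝ} (ht : t ≤ 0) : Aof Φ' t = -Φ' (-t) := by
  rw [← Aof_of_nonneg h0 (neg_nonneg.2 ht), Aof_neg, neg_neg]

theorem Aof_eq_sub (h0 : Φ' 0 = 0) : Aof Φ' = fun t => Φ' (max t 0) - Φ' (max (-t) 0) := by
  funext t
  rcases le_total 0 t with ht | ht
  · rw [Aof_of_nonneg h0 ht, max_eq_left ht, max_eq_right (neg_nonpos.2 ht), h0, sub_zero]
  · rw [Aof_of_nonpos h0 ht, max_eq_right ht, max_eq_left (neg_nonneg.2 ht), h0, zero_sub]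

end Aof

namespace IsNFunction

variable {φ φ' : ℝ → ℝ}

theorem deriv_nonneg (hN : IsNFunction φ φ') {t : ℝ} (ht : 0 ≤ t) : 0 ≤ φ' t := by
  rcases ht.eq_or_lt with rfl | ht
  · exact hN.deriv_zero.ge
  · exact (hN.deriv_pos t ht).le

theorem continuousOn_deriv (hN : IsNFunction φ φ') (hd : ∀ t, 0 < t → ContinuousAt φ' t) :
    ContinuousOn φ' (Ici 0) := by
  intro t ht
  rcases (mem_Ici.1 ht).eq_or_lt with rfl | ht
  · exact hN.deriv_rightCont 0 le_rfl
  · exact (hd t ht).continuousWithinAt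

theorem continuous_Aof (hN : IsNFunction φ φ') (hd : ∀ t, 0 < t → ContinuousAt φ' t) :
    Continuous (Aof φ') := by
  have h := hN.continuousOn_deriv hd
  have hmax : ∀ g : ℝ → ℝ, Continuous g → Continuous fun t => φ' (max (g t) 0) := fun g hg =>
    h.comp_continuous (hg.max continuous_const) fun t => le_max_right (g t) 0
  rw [Aof_eq_sub hN.deriv_zero]
  exact (hmax id continuous_id).sub (hmax Neg.neg continuous_neg)

end IsNFunction

namespace UniformlyConvex

variable {φ φ' φ'' : ℝ → ℝ} {c C : ℝ}

theorem sub_bounds_of_le_two_mul (hU : UniformlyConvex φ' φ'' c C) (hN : IsNFunction φ φ')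
    (hd : ∀ t, 0 < t → HasDerivAt φ' (φ'' t) t) (hc : 0 ≤ c) (hC : 0 ≤ C)
    {η ξ : ℝ} (hη : 0 < η) (hηξ : η < ξ) (hξη : ξ ≤ 2 * η) :
    c / 3 ^ C * φ' (ξ + η) * (ξ - η) ≤ (ξ + η) * (φ' ξ - φ' η) ∧
      (ξ + η) * (φ' ξ - φ' η) ≤ 3 * C * φ' (ξ + η) * (ξ - η) := by
  obtain ⟨x, ⟨hηx, hxξ⟩, hx⟩ := exists_hasDerivAt_eq_slope φ' φ'' hηξ
    (fun y hy => (hd y (hη.trans_le hy.1)).continuousAt.continuousWithinAt)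
    (fun y hy => hd y (hη.trans hy.1))
  have hslope : φ' ξ - φ' η = φ'' x * (ξ - η) := by
    rw [hx, div_mul_cancel₀ _ (sub_ne_zero.2 hηξ.ne')]
  have hx0 : 0 < x := hη.trans hηx
  have hxT : x ≤ ξ + η := by linarith
  have hTx : ξ + η ≤ 3 * x := by linarith
  have hφx : 0 < φ' x := hN.deriv_pos x hx0
  have hgrow : φ' (ξ + η) ≤ 3 ^ C * φ' x := hU.apply_le_rpow_mul hd hC hφx.le hx0 hxT hTx
  have hmono : φ' x ≤ φ' (ξ + η) := hN.deriv_mono hx0.le (hx0.le.trans hxT) hxT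
  obtain ⟨hlow, hup⟩ := hU x hx0
  have hφ''x : 0 ≤ φ'' x := by nlinarith
  have hδ : 0 ≤ φ'' x * (ξ - η) := mul_nonneg hφ''x (by linarith)
  rw [hslope]
  constructor
  · calc c / 3 ^ C * φ' (ξ + η) * (ξ - η) ≤ c / 3 ^ C * (3 ^ C * φ' x) * (ξ - η) := by
          gcongr
      _ = c * φ' x * (ξ - η) := by field_simp
      _ ≤ x * φ'' x * (ξ - η) := by gcongr
      _ ≤ (ξ + η) * (φ'' x * (ξ - η)) := by rw [← mul_assoc]; gcongr
  · calc (ξ + η) * (φ'' x * (ξ - η)) ≤ 3 * x * (φ'' x * (ξ - η)) := by gcongr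
      _ = 3 * (x * φ'' x) * (ξ - η) := by ring
      _ ≤ 3 * (C * φ' x) * (ξ - η) := by gcongr
      _ ≤ 3 * C * φ' (ξ + η) * (ξ - η) := by rw [← mul_assoc]; gcongr

theorem sub_bounds_of_two_mul_le (hU : UniformlyConvex φ' φ'' c C) (hN : IsNFunction φ φ')
    (hd : ∀ t, 0 < t → HasDerivAt φ' (φ'' t) t) (hc : 0 ≤ c) (hC : 0 ≤ C)
    {η ξ : ℝ} (hη : 0 ≤ η) (hξ : 0 < ξ) (hηξ : 2 * η ≤ ξ) :
    (1 - (2 ^ c)⁻¹) / 3 ^ C * φ' (ξ + η) * (ξ - η) ≤ (ξ + η) * (φ' ξ - φ' η) ∧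
      (ξ + η) * (φ' ξ - φ' η) ≤ 3 * φ' (ξ + η) * (ξ - η) := by
  have hφη : 0 ≤ φ' η := hN.deriv_nonneg hη
  have hφξ : 0 < φ' ξ := hN.deriv_pos ξ hξ
  have hξT : ξ ≤ ξ + η := by linarith
  constructor
  · have hhalf : 2 ^ c * φ' (ξ / 2) ≤ φ' ξ := by
      simpa [mul_div_cancel₀] using hU.rpow_mul_le_apply hd (half_pos hξ) one_le_two
    have hηhalf : φ' η ≤ φ' (ξ / 2) := hN.deriv_mono hη (half_pos hξ).le (by linarith)
    have hgap : (1 - (2 ^ c)⁻¹) * φ' ξ ≤ φ' ξ - φ' η := by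
      have h2c : 0 < (2 : ℝ) ^ c := by positivity
      have : φ' η ≤ (2 ^ c)⁻¹ * φ' ξ := by
        rw [inv_mul_eq_div, le_div_iff₀ h2c]
        nlinarith [mul_le_mul_of_nonneg_left hηhalf h2c.le]
      linarith
    have hgap0 : 0 ≤ 1 - ((2 : ℝ) ^ c)⁻¹ :=
      sub_nonneg.2 (inv_le_one_of_one_le₀ (Real.one_le_rpow one_le_two hc))
    have hgrow : φ' (ξ + η) ≤ 3 ^ C * φ' ξ :=
      hU.apply_le_rpow_mul hd hC hφξ.le hξ hξT (by linarith)
    calc (1 - (2 ^ c)⁻¹) / 3 ^ C * φ' (ξ + η) * (ξ - η)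
        ≤ (1 - (2 ^ c)⁻¹) / 3 ^ C * (3 ^ C * φ' ξ) * (ξ + η) := by
          gcongr
          · linarith
          · linarith
      _ = (1 - (2 ^ c)⁻¹) * φ' ξ * (ξ + η) := by field_simp
      _ ≤ (ξ + η) * (φ' ξ - φ' η) := by rw [mul_comm (ξ + η)]; gcongr
  · have hmono : φ' ξ ≤ φ' (ξ + η) := hN.deriv_mono hξ.le (hξ.le.trans hξT) hξT
    have hφT : 0 ≤ φ' (ξ + η) := hφξ.le.trans hmono
    calc (ξ + η) * (φ' ξ - φ' η) ≤ (ξ + η) * φ' (ξ + η) := by gcongr; linarith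
      _ ≤ 3 * (ξ - η) * φ' (ξ + η) := by gcongr; linarith
      _ = 3 * φ' (ξ + η) * (ξ - η) := by ring

theorem add_bounds (hU : UniformlyConvex φ' φ'' c C) (hN : IsNFunction φ φ')
    (hd : ∀ t, 0 < t → HasDerivAt φ' (φ'' t) t) (hC : 0 ≤ C)
    {s t : ℝ} (hs : 0 ≤ s) (ht : 0 ≤ t) (hst : 0 < s + t) :
    φ' (s + t) ≤ 3 ^ C * (φ' s + φ' t) ∧ φ' s + φ' t ≤ 2 * φ' (s + t) := by
  have hle : ∀ u, 0 ≤ u → u ≤ s + t → φ' u ≤ φ' (s + t) := fun u hu hut =>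
    hN.deriv_mono hu hst.le hut
  refine ⟨?_, by linarith [hle s hs (by linarith), hle t ht (by linarith)]⟩
  have hgrow : ∀ u, u ≤ s + t → s + t ≤ 2 * u → φ' (s + t) ≤ 3 ^ C * φ' u := fun u h1 h2 =>
    hU.apply_le_rpow_mul hd hC (hN.deriv_nonneg (by linarith)) (by linarith) h1 (by linarith)
  rcases le_total t s with hts | hst'
  · exact (hgrow s (by linarith) (by linarith)).trans (by gcongr; linarith [hN.deriv_nonneg ht])
  · exact (hgrow t (by linarith) (by linarith)).trans (by gcongr; linarith [hN.deriv_nonneg hs])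

theorem sub_bounds_of_nonneg (hU : UniformlyConvex φ' φ'' c C) (hN : IsNFunction φ φ')
    (hd : ∀ t, 0 < t → HasDerivAt φ' (φ'' t) t) (hc : 0 ≤ c) (hC : 0 ≤ C)
    {η ξ : ℝ} (hη : 0 ≤ η) (hηξ : η < ξ) :
    min c (1 - (2 ^ c)⁻¹) / 3 ^ C * φ' (ξ + η) * (ξ - η) ≤ (ξ + η) * (φ' ξ - φ' η) ∧
      (ξ + η) * (φ' ξ - φ' η) ≤ 3 * (C + 1) * φ' (ξ + η) * (ξ - η) := by
  have hξ : 0 < ξ := hη.trans_lt hηξ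
  have hφδ : 0 ≤ φ' (ξ + η) * (ξ - η) :=
    mul_nonneg (hN.deriv_pos _ (by linarith)).le (by linarith)
  simp only [mul_assoc] at hφδ ⊢
  rcases le_or_gt ξ (2 * η) with hnear | hfar
  · obtain ⟨hlow, hup⟩ := hU.sub_bounds_of_le_two_mul hN hd hc hC (by linarith) hηξ hnear
    simp only [mul_assoc] at hlow hup
    constructor
    · refine le_trans ?_ hlow
      gcongr
      exact min_le_left _ _
    · refine hup.trans ?_
      gcongr
      linarith
  · obtain ⟨hlow, hup⟩ := hU.sub_bounds_of_two_mul_le hN hd hc hC hη hξ hfar.le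
    simp only [mul_assoc] at hlow hup
    constructor
    · refine le_trans ?_ hlow
      gcongr
      exact min_le_right _ _
    · exact hup.trans (by nlinarith [mul_nonneg hC hφδ])

theorem Aof_slope_bounds (hU : UniformlyConvex φ' φ'' c C) (hN : IsNFunction φ φ')
    (hd : ∀ t, 0 < t → HasDerivAt φ' (φ'' t) t) (hc : 0 ≤ c) (hC : 0 ≤ C)
    {η ξ : ℝ} (hηξ : η < ξ) :
    min c (1 - (2 ^ c)⁻¹) / 3 ^ C * φ' (|ξ| + |η|) * (ξ - η) ≤
        (|ξ| + |η|) * (Aof φ' ξ - Aof φ' η) ∧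
      (|ξ| + |η|) * (Aof φ' ξ - Aof φ' η) ≤ 3 * (C + 1) * φ' (|ξ| + |η|) * (ξ - η) := by
  have h0 := hN.deriv_zero
  rcases le_total 0 η with hη | hη
  · rw [abs_of_nonneg hη, abs_of_nonneg (hη.trans hηξ.le), Aof_of_nonneg h0 hη,
      Aof_of_nonneg h0 (hη.trans hηξ.le)]
    exact hU.sub_bounds_of_nonneg hN hd hc hC hη hηξ
  rcases le_total ξ 0 with hξ | hξ
  · obtain ⟨hlow, hup⟩ := hU.sub_bounds_of_nonneg hN hd hc hC (neg_nonneg.2 hξ) (neg_lt_neg hηξ)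
    rw [abs_of_nonpos hξ, abs_of_nonpos hη, Aof_of_nonpos h0 hξ, Aof_of_nonpos h0 hη]
    rw [add_comm (-η)] at hlow hup
    constructor <;> linarith
  have hT : 0 < ξ + -η := by linarith
  obtain ⟨hlow, hup⟩ := hU.add_bounds hN hd hC hξ (neg_nonneg.2 hη) hT
  rw [abs_of_nonneg hξ, abs_of_nonpos hη, Aof_of_nonneg h0 hξ, Aof_of_nonpos h0 hη,
    sub_neg_eq_add, ← sub_eq_add_neg]
  rw [← sub_eq_add_neg] at hlow hup
  have hφT : 0 < φ' (ξ - η) := hN.deriv_pos _ (by linarith)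
  have h3C : (1 : ℝ) ≤ 3 ^ C := Real.one_le_rpow (by norm_num) hC
  have hm : min c (1 - (2 ^ c)⁻¹) / 3 ^ C * φ' (ξ - η) ≤ φ' ξ + φ' (-η) := by
    rw [div_mul_eq_mul_div, div_le_iff₀ (by positivity)]
    calc min c (1 - (2 ^ c)⁻¹) * φ' (ξ - η) ≤ 1 * φ' (ξ - η) := by
          gcongr
          exact (min_le_right _ _).trans (sub_le_self _ (by positivity))
      _ ≤ (φ' ξ + φ' (-η)) * 3 ^ C := by linarith
  have hδ : 0 < ξ - η := by linarith
  refine ⟨by nlinarith [mul_le_mul_of_nonneg_left hm hδ.le], ?_⟩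
  calc (ξ - η) * (φ' ξ + φ' (-η)) ≤ (ξ - η) * (2 * φ' (ξ - η)) := by gcongr
    _ ≤ 3 * (C + 1) * φ' (ξ - η) * (ξ - η) := by nlinarith [mul_pos hδ hφT]

end UniformlyConvex

theorem UniformlyConvex.orthotropicGrowth_of_slope_bounds {φ' φ'' A : ℝ → ℝ} {c C m M : ℝ}
    (hU : UniformlyConvex φ' φ'' c C) (hc : 0 < c) (hC : 0 < C) (hm : 0 ≤ m) (hM : 0 ≤ M)
    (hpos : ∀ t, 0 < t → 0 < φ' t)
    (hA : ∀ η ξ, η < ξ → m * φ' (|ξ| + |η|) * (ξ - η) ≤ (|ξ| + |η|) * (A ξ - A η) ∧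
      (|ξ| + |η|) * (A ξ - A η) ≤ M * φ' (|ξ| + |η|) * (ξ - η)) :
    OrthotropicGrowth φ'' A (m / C) (M / c) := by
  have key : ∀ η ξ, η < ξ →
      m / C * (φ'' (|ξ| + |η|) * |ξ - η| ^ 2) ≤ (A ξ - A η) * (ξ - η) ∧
        |A ξ - A η| ≤ M / c * (φ'' (|ξ| + |η|) * |ξ - η|) := by
    intro η ξ hηξ
    set T := |ξ| + |η|
    have hδ : 0 < ξ - η := sub_pos.2 hηξ
    have hT : 0 < T := (abs_pos.2 hδ.ne').trans_le (abs_sub ξ η)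
    obtain ⟨hlow, hup⟩ := hA η ξ hηξ
    obtain ⟨hcT, hCT⟩ := hU T hT
    have hφT := hpos T hT
    have hΔ : 0 ≤ A ξ - A η := by
      refine nonneg_of_mul_nonneg_right ?_ hT
      exact (by positivity : 0 ≤ m * φ' T * (ξ - η)).trans hlow
    rw [abs_of_pos hδ, abs_of_nonneg hΔ]
    constructor
    · rw [div_mul_eq_mul_div, div_le_iff₀ hC]
      refine le_of_mul_le_mul_left ?_ hT
      calc T * (m * (φ'' T * (ξ - η) ^ 2)) = m * (T * φ'' T) * (ξ - η) ^ 2 := by ring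
        _ ≤ m * (C * φ' T) * (ξ - η) ^ 2 := by gcongr
        _ = C * (ξ - η) * (m * φ' T * (ξ - η)) := by ring
        _ ≤ C * (ξ - η) * (T * (A ξ - A η)) := by gcongr
        _ = T * ((A ξ - A η) * (ξ - η) * C) := by ring
    · rw [div_mul_eq_mul_div, le_div_iff₀ hc]
      refine le_of_mul_le_mul_left ?_ hT
      calc T * ((A ξ - A η) * c) = c * (T * (A ξ - A η)) := by ring
        _ ≤ c * (M * φ' T * (ξ - η)) := by gcongr
        _ = M * (c * φ' T) * (ξ - η) := by ring
        _ ≤ M * (T * φ'' T) * (ξ - η) := by gcongr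
        _ = T * (M * (φ'' T * (ξ - η))) := by ring
  intro ξ η
  rcases lt_trichotomy η ξ with hηξ | rfl | hξη
  · exact key η ξ hηξ
  · simp
  · have h := key ξ η hξη
    rwa [add_comm |η|, abs_sub_comm η ξ, abs_sub_comm (A η),
      show (A η - A ξ) * (η - ξ) = (A ξ - A η) * (ξ - η) by ring] at h

theorem statement7_general (c C D : ℝ) (hc : 0 < c) (hcC : c ≤ C) :
    ∃ c' C' : ℝ, 0 < c' ∧ c' ≤ C' ∧
      ∀ (φ φ' φ'' : ℝ → ℝ),
        IsNFunction φ φ' →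
        ContDiffOn ℝ 2 φ (Set.Ioi 0) →
        (∀ t : ℝ, 0 < t → HasDerivAt φ (φ' t) t) →
        (∀ t : ℝ, 0 < t → HasDerivAt φ' (φ'' t) t) →
        Delta2 φ D →
        UniformlyConvex φ' φ'' c C →
        Continuous (Aof φ') ∧ OrthotropicGrowth φ'' (Aof φ') c' C' := by
  have hC : 0 < C := hc.trans_le hcC
  have h3C : (1 : ℝ) ≤ 3 ^ C := Real.one_le_rpow (by norm_num) hC.le
  have hm : 0 < min c (1 - (2 ^ c)⁻¹) :=
    lt_min hc (sub_pos.2 (inv_lt_one_of_one_lt₀ (Real.one_lt_rpow one_lt_two hc)))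
  refine ⟨min c (1 - (2 ^ c)⁻¹) / 3 ^ C / C, 3 * (C + 1) / c, by positivity, ?_, ?_⟩
  · have hm1 : min c (1 - (2 ^ c)⁻¹) / 3 ^ C / C ≤ 1 := by
      rw [div_div, div_le_one (by positivity)]
      nlinarith [min_le_left c (1 - (2 ^ c)⁻¹)]
    have h1M : 1 ≤ 3 * (C + 1) / c := by
      rw [one_le_div hc]
      linarith
    exact hm1.trans h1M
  intro φ φ' φ'' hN _ _ hd _ hU
  exact ⟨hN.continuous_Aof fun t ht => (hd t ht).continuousAt,
    hU.orthotropicGrowth_of_slope_bounds hc hC (by positivity) (by positivity) hN.deriv_pos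
      fun η ξ hηξ => hU.Aof_slope_bounds hN hd hc.le hC.le hηξ⟩

/-- for a uniformly convex N-function `φ` in `Δ₂`, the map
`A(t) = φ'(|t|) t/|t|` is continuous and `(φ, A)` satisfies the orthotropic growth
conditions with constants depending only on `c, C, D`. -/
theorem statement7 (c C D : ℝ) (hc : 0 < c) (hcC : c ≤ C) (hD : 0 < D) :
    ∃ c' C' : ℝ, 0 < c' ∧ c' ≤ C' ∧
      ∀ (φ φ' φ'' : ℝ → ℝ),
        IsNFunction φ φ' →
        ContDiffOn ℝ 2 φ (Set.Ioi 0) →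
        (∀ t : ℝ, 0 < t → HasDerivAt φ (φ' t) t) →
        (∀ t : ℝ, 0 < t → HasDerivAt φ' (φ'' t) t) →
        Delta2 φ D →
        UniformlyConvex φ' φ'' c C →
        Continuous (Aof φ') ∧ OrthotropicGrowth φ'' (Aof φ') c' C' :=
  statement7_general c C D hc hcC
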